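/- Let S be a finite R-trivial monoid. The map C : S → L defined by C(x) = S x^ω satisfies C(xy) = C(x) ∨ C(y), where the join in L (left ideals of idempotents ordered by reverse inclusion) is given by Se ∨ Sf = S(ef)^ω. In particular, S(xy)^ω = S(x^ω y^ω)^ω. -/

import Mathlib

/-!
In an R-trivial monoid, `e * u * w = e` forces `e * u = e`. Hence the elements absorbed on the
right by `e` form a submonoid that contains both factors of each of its products, and contains
`z` whenever it contains a positive power of `z`. Both `(x * y) ^ c` and `(x ^ a * y ^ b) ^ d`
therefore absorb `x` and `y`, so each absorbs the other and they generate the same left ideal.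
-/

def IsRTrivial (M : Type*) [Monoid M] : Prop :=
  ∀ a b : M, {z : M | ∃ s : M, a * s = z} = {z : M | ∃ s : M, b * s = z} → a = b

section Absorb

variable {M : Type*} [Monoid M] {e u v : M}

theorem mul_mul_eq_self (hu : e * u = e) (hv : e * v = e) : e * (u * v) = e := by
  rw [← mul_assoc, hu, hv]

theorem mul_pow_eq_self (h : e * u = e) (n : ℕ) : e * u ^ n = e := by
  induction n with
  | zero => rw [pow_zero, mul_one]
  | succ k ih => rw [pow_succ, ← mul_assoc, ih, h]

theorem leftIdeal_eq_of_mul_eq_self (huv : u * v = u) (hvu : v * u = v) :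
    {z : M | ∃ s : M, s * u = z} = {z : M | ∃ s : M, s * v = z} := by
  ext z
  constructor
  · rintro ⟨s, rfl⟩
    exact ⟨s * u, by rw [mul_assoc, huv]⟩
  · rintro ⟨s, rfl⟩
    exact ⟨s * v, by rw [mul_assoc, hvu]⟩

end Absorb

namespace IsRTrivial

variable {M : Type*} [Monoid M] {e u v : M}

theorem mul_eq_self_of_mul_mul_eq_self {w : M} (hR : IsRTrivial M) (h : e * u * w = e) :
    e * u = e := by
  apply hR
  ext z
  constructor
  · rintro ⟨s, rfl⟩
    exact ⟨u * s, by rw [← mul_assoc]⟩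
  · rintro ⟨s, rfl⟩
    exact ⟨w * s, by rw [← mul_assoc, h]⟩

theorem mul_left_eq_self_of_mul_mul_eq_self (hR : IsRTrivial M) (h : e * (u * v) = e) :
    e * u = e :=
  hR.mul_eq_self_of_mul_mul_eq_self (w := v) (by rw [mul_assoc, h])

theorem mul_right_eq_self_of_mul_mul_eq_self (hR : IsRTrivial M) (h : e * (u * v) = e) :
    e * v = e :=
  calc e * v = e * u * v := by rw [hR.mul_left_eq_self_of_mul_mul_eq_self h]
    _ = e := by rw [mul_assoc, h]

theorem mul_eq_self_of_mul_pow_eq_self {n : ℕ} (hR : IsRTrivial M) (hn : 0 < n)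
    (h : e * u ^ n = e) : e * u = e := by
  obtain ⟨k, rfl⟩ := Nat.exists_eq_add_of_lt hn
  rw [zero_add, pow_succ'] at h
  exact hR.mul_left_eq_self_of_mul_mul_eq_self h

end IsRTrivial

theorem C_is_morphism_general (M : Type*) [Monoid M]
    (hR : ∀ a b : M, {z : M | ∃ s : M, a * s = z} = {z : M | ∃ s : M, b * s = z} → a = b)
    (x y : M) (a b c d : ℕ) (ha : 0 < a) (hb : 0 < b) (hc : 0 < c) (hd : 0 < d)
    (hxyc : (x * y) ^ c * (x * y) ^ c = (x * y) ^ c)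
    (habd : (x ^ a * y ^ b) ^ d * (x ^ a * y ^ b) ^ d = (x ^ a * y ^ b) ^ d) :
    {z : M | ∃ s : M, s * (x * y) ^ c = z} =
      {z : M | ∃ s : M, s * (x ^ a * y ^ b) ^ d = z} := by
  have hR : IsRTrivial M := hR
  have hexy := hR.mul_eq_self_of_mul_pow_eq_self hc hxyc
  have hex := hR.mul_left_eq_self_of_mul_mul_eq_self hexy
  have hey := hR.mul_right_eq_self_of_mul_mul_eq_self hexy
  have hfab := hR.mul_eq_self_of_mul_pow_eq_self hd habd
  have hfx := hR.mul_eq_self_of_mul_pow_eq_self ha (hR.mul_left_eq_self_of_mul_mul_eq_self hfab)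
  have hfy := hR.mul_eq_self_of_mul_pow_eq_self hb (hR.mul_right_eq_self_of_mul_mul_eq_self hfab)
  exact leftIdeal_eq_of_mul_eq_self
    (mul_pow_eq_self (mul_mul_eq_self (mul_pow_eq_self hex a) (mul_pow_eq_self hey b)) d)
    (mul_pow_eq_self (mul_mul_eq_self hfx hfy) c)

/-- In a finite R-trivial monoid, `C(x) = Sx^ω` is a monoid morphism to the
semilattice of left ideals of idempotents with join `Se ∨ Sf = S(ef)^ω`:
that is, `S(xy)^ω = S(x^ω y^ω)^ω`. -/
theorem C_is_morphism (M : Type*) [Monoid M] [Finite M]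
    (hR : ∀ a b : M, {z : M | ∃ s : M, a * s = z} = {z : M | ∃ s : M, b * s = z} → a = b)
    (x y : M) (a b c d : ℕ) (ha : 0 < a) (hb : 0 < b) (hc : 0 < c) (hd : 0 < d)
    (hxa : x ^ a * x ^ a = x ^ a)
    (hyb : y ^ b * y ^ b = y ^ b)
    (hxyc : (x * y) ^ c * (x * y) ^ c = (x * y) ^ c)
    (habd : (x ^ a * y ^ b) ^ d * (x ^ a * y ^ b) ^ d = (x ^ a * y ^ b) ^ d) :
    {z : M | ∃ s : M, s * (x * y) ^ c = z} =
      {z : M | ∃ s : M, s * (x ^ a * y ^ b) ^ d = z} :=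
  C_is_morphism_general M hR x y a b c d ha hb hc hd hxyc habd
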